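/- arXiv:2505.15672 — 4 statements merged into one kernel-verified Lean document; each statement's English description precedes it below -/
import Mathlib

section
/- Let 𝒞(a,v,w) be as above (N ≥ 3) and let i ≥ 3. Let C̆_i = 𝒞(a,v,w) + E_{1,i} where E_{1,i} is the elementary matrix with a 1 in position (1,i). Then det C̆_i = a^(N-2)·(v_1·w_2 - w_1·v_2) + a^(N-3)·(w_i·v_2 - v_i·w_2). -/
/-- The matrix `𝒞(a,v,w)`: first column `v`, second column `w`, remaining diagonal
entries `a`, zeros elsewhere. -/
def matC (N : ℕ) (a : ℝ) (v w : Fin N → ℝ) : Matrix (Fin N) (Fin N) ℝ :=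
  fun i j =>
    if (j : ℕ) = 0 then v i
    else if (j : ℕ) = 1 then w i
    else if i = j then a else 0

/-!
Every column of `𝒞(a,v,w) + E_{1,i}` other than the first, the second and the `i`-th is `a`
times a standard basis vector. Expanding along those `N - 3` columns leaves `a ^ (N - 3)` times
the `3 × 3` principal minor on rows and columns `1, 2, i`, which is
`!![v₁, w₁, 1; v₂, w₂, 0; vᵢ, wᵢ, a]`.
-/

open Function Matrix

namespace Matrix

variable {ι κ R : Type*} [Fintype ι] [DecidableEq ι] [Fintype κ] [DecidableEq κ] [CommRing R]

theorem det_eq_det_submatrix_mul_pow_of_col_eq_single (M : Matrix ι ι R) {f : κ → ι}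
    (hf : Injective f) (a : R) (hcol : ∀ j ∉ Set.range f, ∀ i, M i j = if i = j then a else 0) :
    M.det = (M.submatrix f f).det * a ^ (Fintype.card ι - Fintype.card κ) := by
  have hzero : ∀ i ∈ Set.range f, ∀ j ∉ Set.range f, M i j = 0 := fun i hi j hj => by
    rw [hcol j hj, if_neg (ne_of_mem_of_not_mem hi hj)]
  rw [M.twoBlockTriangular_det' (· ∈ Set.range f) hzero]
  congr 1
  · -- `convert` reconciles the two `Fintype` instances on the subtype `Set.range f`
    convert (det_submatrix_equiv_self (Equiv.ofInjective f hf) _).symm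
    rfl
  · have hdiag : M.toSquareBlockProp (· ∉ Set.range f) = diagonal fun _ => a := by
      ext i j
      simp only [toSquareBlockProp_def, of_apply, hcol j j.2, diagonal_apply, Subtype.ext_iff]
    rw [hdiag, det_diagonal, Finset.prod_const, Finset.card_univ, Fintype.card_subtype_compl,
      Set.card_range_of_injective hf]

end Matrix

section matC

variable {N : ℕ} (a : ℝ) (v w : Fin N → ℝ)

theorem matC_apply_of_val_eq_zero (x : Fin N) {j : Fin N} (hj : (j : ℕ) = 0) :
    matC N a v w x j = v x :=
  if_pos hj

theorem matC_apply_of_val_eq_one (x : Fin N) {j : Fin N} (hj : (j : ℕ) = 1) :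
    matC N a v w x j = w x := by
  simp only [matC, hj, one_ne_zero, if_false, if_true]

theorem matC_apply_of_two_le_val (x : Fin N) {j : Fin N} (hj : 2 ≤ (j : ℕ)) :
    matC N a v w x j = if x = j then a else 0 := by
  simp only [matC, if_neg (show (j : ℕ) ≠ 0 by omega), if_neg (show (j : ℕ) ≠ 1 by omega)]

variable {a v w} {x₀ x₁ k : Fin N}

theorem submatrix_matC_add_single (h₀ : (x₀ : ℕ) = 0) (h₁ : (x₁ : ℕ) = 1) (hk : 2 ≤ (k : ℕ)) :
    (matC N a v w + single x₀ k 1).submatrix ![x₀, x₁, k] ![x₀, x₁, k] =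
      !![v x₀, w x₀, 1; v x₁, w x₁, 0; v k, w k, a] := by
  ext x y
  fin_cases x <;> fin_cases y <;>
    simp [matC_apply_of_val_eq_zero, matC_apply_of_val_eq_one,
      matC_apply_of_two_le_val _ _ _ _ hk, single_apply, Fin.ext_iff, h₀, h₁] <;> omega

theorem det_matC_add_single (h₀ : (x₀ : ℕ) = 0) (h₁ : (x₁ : ℕ) = 1) (hk : 2 ≤ (k : ℕ)) :
    (matC N a v w + single x₀ k 1).det =
      a ^ (N - 3) * (a * (v x₀ * w x₁ - w x₀ * v x₁) + (w k * v x₁ - v k * w x₁)) := by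
  have hf : Injective ![x₀, x₁, k] := by
    intro x y hxy
    fin_cases x <;> fin_cases y <;> simp [Fin.ext_iff, h₀, h₁] at hxy ⊢ <;> omega
  have hcol : ∀ j ∉ Set.range ![x₀, x₁, k], ∀ x,
      (matC N a v w + single x₀ k 1 : Matrix (Fin N) (Fin N) ℝ) x j = if x = j then a else 0 := by
    intro j hj x
    have hj2 : 2 ≤ (j : ℕ) := by
      by_contra! h
      obtain hj0 | hj1 : (j : ℕ) = 0 ∨ (j : ℕ) = 1 := by omega
      exacts [hj ⟨0, Fin.ext (h₀.trans hj0.symm)⟩, hj ⟨1, Fin.ext (h₁.trans hj1.symm)⟩]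
    have hkj : k ≠ j := fun h => hj ⟨2, h⟩
    rw [Matrix.add_apply, matC_apply_of_two_le_val _ _ _ _ hj2, single_apply_of_col_ne _ _ hkj,
      add_zero]
  rw [det_eq_det_submatrix_mul_pow_of_col_eq_single _ hf a hcol,
    submatrix_matC_add_single h₀ h₁ hk, det_fin_three]
  simp only [Fintype.card_fin, of_apply, cons_val', cons_val_zero, cons_val_one, cons_val_two,
    head_cons, tail_cons, empty_val', cons_val_fin_one, head_fin_const]
  ring

end matC

theorem matC_plus_unit_det (N : ℕ) (a : ℝ) (v w : Fin N → ℝ)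
    (i : ℕ) (hi : 3 ≤ i) (hiN : i ≤ N) :
    (matC N a v w +
        Matrix.single (⟨0, by omega⟩ : Fin N) (⟨i - 1, by omega⟩ : Fin N) (1 : ℝ)).det =
      a ^ (N - 2) * (v ⟨0, by omega⟩ * w ⟨1, by omega⟩ - w ⟨0, by omega⟩ * v ⟨1, by omega⟩)
      + a ^ (N - 3) *
        (w ⟨i - 1, by omega⟩ * v ⟨1, by omega⟩ - v ⟨i - 1, by omega⟩ * w ⟨1, by omega⟩) := by
  rw [det_matC_add_single (x₁ := ⟨1, by omega⟩) rfl rfl (by simp only; omega),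
    show N - 2 = N - 3 + 1 by omega, pow_succ]
  ring
end

section
/- Consider the one-parameter family of discretizations of the harmonic oscillator: q' = ((1 - h²ω²(1-a)(1-b))q + hp)/Δ, p' = -(hω²(hab·p + q) - p)/Δ with Δ = 1 + h²ω²(1-a)b, viewed as a map Φ on ℝ². The map Φ preserves the canonical symplectic form dq∧dp (equivalently, the Jacobian determinant of Φ equals 1) if and only if (1 + h²ω²a(1-b))/(1 + h²ω²b(1-a)) = 1, i.e. if and only if a = b (assuming h > 0 and ω ≠ 0). -/
/-! The numerator of the Jacobian determinant (over `Δ²`) factors as `Δ Δ'`, so the determinant is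
`Δ' / Δ`, where `Δ' = 1 + h²ω²a(1-b)` is the denominator
of the same scheme with `a` and `b` exchanged. Since `Δ' - Δ = h²ω²(a - b)`, the determinant is `1`
exactly when `a = b`. -/

/-- The paper's `Δ`, with `u = h²ω²`. -/
def oscDenom (u a b : ℝ) : ℝ := 1 + u * (1 - a) * b

lemma oscDenom_swap_sub (u a b : ℝ) : oscDenom u b a - oscDenom u a b = u * (a - b) := by
  unfold oscDenom
  ring

lemma oscDenom_swap_eq_iff {u : ℝ} (hu : u ≠ 0) (a b : ℝ) :
    oscDenom u b a = oscDenom u a b ↔ a = b := by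
  rw [← sub_eq_zero, oscDenom_swap_sub, mul_eq_zero, sub_eq_zero, or_iff_right hu]

lemma jacobian_det_eq_div (h ω a b : ℝ) (hΔ : oscDenom (h ^ 2 * ω ^ 2) a b ≠ 0) :
    ((1 - h ^ 2 * ω ^ 2 * (1 - a) * (1 - b)) / oscDenom (h ^ 2 * ω ^ 2) a b)
        * ((1 - h ^ 2 * ω ^ 2 * a * b) / oscDenom (h ^ 2 * ω ^ 2) a b)
      - (h / oscDenom (h ^ 2 * ω ^ 2) a b) * (-(h * ω ^ 2) / oscDenom (h ^ 2 * ω ^ 2) a b)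
      = oscDenom (h ^ 2 * ω ^ 2) b a / oscDenom (h ^ 2 * ω ^ 2) a b := by
  field_simp
  unfold oscDenom
  ring

/-- The one-parameter family of discretizations of the harmonic oscillator preserves the
canonical symplectic form (its Jacobian determinant equals `1`) if and only if `a = b`. -/
theorem discretization_symplectic_iff (h ω a b : ℝ) (hh : 0 < h) (hω : ω ≠ 0)
    (Δ : ℝ) (hΔdef : Δ = 1 + h ^ 2 * ω ^ 2 * (1 - a) * b) (hΔ : Δ ≠ 0) :
    ((1 - h ^ 2 * ω ^ 2 * (1 - a) * (1 - b)) / Δ) * ((1 - h ^ 2 * ω ^ 2 * a * b) / Δ)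
      - (h / Δ) * (-(h * ω ^ 2) / Δ) = 1 ↔ a = b := by
  change Δ = oscDenom (h ^ 2 * ω ^ 2) a b at hΔdef
  subst hΔdef
  rw [jacobian_det_eq_div h ω a b hΔ, div_eq_one_iff_eq hΔ]
  exact oscDenom_swap_eq_iff (by positivity) a b
end

section
/- For the symplectic discretization with equal parameter a, the discrete Demkov–Fradkin quantity F = p_1·p_2 + ((2a-1)/2)·hω²·(q_1·p_2 + q_2·p_1) + ω²·q_1·q_2 is an exact invariant: F(q_1',p_1',q_2',p_2') = F(q_1,p_1,q_2,p_2). -/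
/-!
`F` is the polarization of the modified energy `p² + (2a-1)hω² q p + ω² q²`, which the
scheme conserves exactly. The update is linear and acts identically on both degrees of freedom,
so it commutes with polarization, and the conserved energy yields the conserved bilinear
quantity `F`.
-/

namespace DemkovFradkin

variable (h ω a Δ : ℝ)

noncomputable def stepQ (q p : ℝ) : ℝ := ((1 - h ^ 2 * ω ^ 2 * (1 - a) ^ 2) * q + h * p) / Δ

noncomputable def stepP (q p : ℝ) : ℝ := -(h * ω ^ 2 * (h * a ^ 2 * p + q) - p) / Δ

lemma stepQ_add (q₁ p₁ q₂ p₂ : ℝ) :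
    stepQ h ω a Δ (q₁ + q₂) (p₁ + p₂) = stepQ h ω a Δ q₁ p₁ + stepQ h ω a Δ q₂ p₂ := by
  simp only [stepQ]
  ring

lemma stepP_add (q₁ p₁ q₂ p₂ : ℝ) :
    stepP h ω a Δ (q₁ + q₂) (p₁ + p₂) = stepP h ω a Δ q₁ p₁ + stepP h ω a Δ q₂ p₂ := by
  simp only [stepP]
  ring

def modifiedEnergy (q p : ℝ) : ℝ := p ^ 2 + (2 * a - 1) * h * ω ^ 2 * q * p + ω ^ 2 * q ^ 2

lemma modifiedEnergy_step (hΔdef : Δ = 1 + h ^ 2 * ω ^ 2 * (1 - a) * a) (hΔ : Δ ≠ 0)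
    (q p : ℝ) :
    modifiedEnergy h ω a (stepQ h ω a Δ q p) (stepP h ω a Δ q p) = modifiedEnergy h ω a q p := by
  simp only [modifiedEnergy, stepQ, stepP]
  field_simp
  subst hΔdef
  ring

noncomputable def demkovFradkin (q₁ p₁ q₂ p₂ : ℝ) : ℝ :=
  p₁ * p₂ + (2 * a - 1) / 2 * h * ω ^ 2 * (q₁ * p₂ + q₂ * p₁) + ω ^ 2 * q₁ * q₂

lemma demkovFradkin_eq_polar (q₁ p₁ q₂ p₂ : ℝ) :
    demkovFradkin h ω a q₁ p₁ q₂ p₂ =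
      (modifiedEnergy h ω a (q₁ + q₂) (p₁ + p₂) - modifiedEnergy h ω a q₁ p₁
        - modifiedEnergy h ω a q₂ p₂) / 2 := by
  simp only [demkovFradkin, modifiedEnergy]
  ring

lemma demkovFradkin_step (hΔdef : Δ = 1 + h ^ 2 * ω ^ 2 * (1 - a) * a) (hΔ : Δ ≠ 0)
    (q₁ p₁ q₂ p₂ : ℝ) :
    demkovFradkin h ω a (stepQ h ω a Δ q₁ p₁) (stepP h ω a Δ q₁ p₁)
        (stepQ h ω a Δ q₂ p₂) (stepP h ω a Δ q₂ p₂) =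
      demkovFradkin h ω a q₁ p₁ q₂ p₂ := by
  rw [demkovFradkin_eq_polar, demkovFradkin_eq_polar, ← stepQ_add, ← stepP_add]
  simp only [modifiedEnergy_step h ω a Δ hΔdef hΔ]

end DemkovFradkin

open DemkovFradkin in
/-- The discrete Demkov–Fradkin quantity
`F = p₁p₂ + ((2a-1)/2)hω²(q₁p₂ + q₂p₁) + ω²q₁q₂` is an exact invariant of the symplectic
discretization of the isotropic harmonic oscillator with equal parameter `a`. -/
theorem discrete_demkov_fradkin_invariant (h ω a : ℝ) (Δ : ℝ)
    (hΔdef : Δ = 1 + h ^ 2 * ω ^ 2 * (1 - a) * a) (hΔ : Δ ≠ 0)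
    (q₁ p₁ q₂ p₂ q₁' p₁' q₂' p₂' : ℝ)
    (hq₁' : q₁' = ((1 - h ^ 2 * ω ^ 2 * (1 - a) ^ 2) * q₁ + h * p₁) / Δ)
    (hp₁' : p₁' = -(h * ω ^ 2 * (h * a ^ 2 * p₁ + q₁) - p₁) / Δ)
    (hq₂' : q₂' = ((1 - h ^ 2 * ω ^ 2 * (1 - a) ^ 2) * q₂ + h * p₂) / Δ)
    (hp₂' : p₂' = -(h * ω ^ 2 * (h * a ^ 2 * p₂ + q₂) - p₂) / Δ)
    (F : ℝ → ℝ → ℝ → ℝ → ℝ)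
    (hF : ∀ x₁ y₁ x₂ y₂, F x₁ y₁ x₂ y₂ =
      y₁ * y₂ + (2 * a - 1) / 2 * h * ω ^ 2 * (x₁ * y₂ + x₂ * y₁) + ω ^ 2 * x₁ * x₂) :
    F q₁' p₁' q₂' p₂' = F q₁ p₁ q₂ p₂ := by
  subst hq₁' hp₁' hq₂' hp₂'
  rw [hF, hF]
  exact demkovFradkin_step h ω a Δ hΔdef hΔ q₁ p₁ q₂ p₂
end

section
/- In the canonical Poisson bracket on ℝ^{2N}, the Demkov–Fradkin components F_{ij} = p_i p_j + α q_i q_j satisfy {F_{ij}, F_{kl}} = α(L_{jl}δ_{ik} + L_{jk}δ_{il} + L_{il}δ_{jk} + L_{ik}δ_{jl}); in particular when α = 0 all the F_{ij} = p_i p_j Poisson-commute. -/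
/-- The canonical Poisson bracket `{f,g} = ∑ s (∂f/∂q_s ∂g/∂p_s - ∂g/∂q_s ∂f/∂p_s)`
of two functions of `(q, p) ∈ ℝᴺ × ℝᴺ`, evaluated at the point `(q, p)`. -/
noncomputable def poissonBracket {N : ℕ} (f g : (Fin N → ℝ) → (Fin N → ℝ) → ℝ)
    (q p : Fin N → ℝ) : ℝ :=
  ∑ s : Fin N,
    (deriv (fun t => f (Function.update q s t) p) (q s) *
        deriv (fun t => g q (Function.update p s t)) (p s)
      - deriv (fun t => g (Function.update q s t) p) (q s) *
        deriv (fun t => f q (Function.update p s t)) (p s))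

/-- Angular momentum `L_{ij} = q_i p_j - q_j p_i`. -/
def angMom {N : ℕ} (i j : Fin N) : (Fin N → ℝ) → (Fin N → ℝ) → ℝ :=
  fun q p => q i * p j - q j * p i

/-- The Demkov–Fradkin tensor component `F_{ij} = p_i p_j + α q_i q_j`. -/
def demkovFradkin {N : ℕ} (α : ℝ) (i j : Fin N) : (Fin N → ℝ) → (Fin N → ℝ) → ℝ :=
  fun q p => p i * p j + α * q i * q j

/-! The partial derivatives of `F_{ij}` are `∂F_{ij}/∂q_s = α (δ_{is} q_j + q_i δ_{js})` and
`∂F_{ij}/∂p_s = δ_{is} p_j + p_i δ_{js}`. Each summand of the bracket is then a combination of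
products `δ_{as} δ_{bs}`, and summing over `s` contracts them to `δ_{ab}`. -/

section Coordinates

variable {ι : Type*} [DecidableEq ι]

theorem hasDerivAt_update_apply [Fintype ι] (x : ι → ℝ) (s i : ι) (t : ℝ) :
    HasDerivAt (fun t => Function.update x s t i) (if i = s then 1 else 0) t := by
  simpa [Pi.single_apply] using hasDerivAt_pi.1 (hasDerivAt_update x s t) i

theorem hasDerivAt_update_apply_mul_update_apply [Fintype ι] (x : ι → ℝ) (s i j : ι) :
    HasDerivAt (fun t => Function.update x s t i * Function.update x s t j)
      ((if i = s then 1 else 0) * x j + x i * (if j = s then 1 else 0)) (x s) := by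
  simpa using (hasDerivAt_update_apply x s i (x s)).fun_mul (hasDerivAt_update_apply x s j (x s))

theorem sum_ite_eq_mul_ite_eq_mul [Fintype ι] (a b : ι) (c : ℝ) :
    ∑ s, (if a = s then (1 : ℝ) else 0) * (if b = s then 1 else 0) * c =
      (if a = b then 1 else 0) * c := by
  simp only [ite_mul, mul_ite, one_mul, zero_mul, mul_zero, Finset.sum_ite_eq,
    Finset.mem_univ, if_true]

end Coordinates

section DemkovFradkin

variable {N : ℕ} (α : ℝ) (i j s : Fin N) (q p : Fin N → ℝ)

theorem deriv_demkovFradkin_update_q :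
    deriv (fun t => demkovFradkin α i j (Function.update q s t) p) (q s) =
      α * ((if i = s then 1 else 0) * q j + q i * (if j = s then 1 else 0)) := by
  simp only [demkovFradkin, mul_assoc]
  exact (((hasDerivAt_update_apply_mul_update_apply q s i j).const_mul α).const_add _).deriv

theorem deriv_demkovFradkin_update_p :
    deriv (fun t => demkovFradkin α i j q (Function.update p s t)) (p s) =
      (if i = s then 1 else 0) * p j + p i * (if j = s then 1 else 0) :=
  ((hasDerivAt_update_apply_mul_update_apply p s i j).add_const _).deriv

end DemkovFradkin

theorem poisson_demkovFradkin_demkovFradkin {N : ℕ} (α : ℝ) (i j k l : Fin N)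
    (q p : Fin N → ℝ) :
    poissonBracket (demkovFradkin α i j) (demkovFradkin α k l) q p =
      α * (angMom j l q p * (if i = k then 1 else 0)
        + angMom j k q p * (if i = l then 1 else 0)
        + angMom i l q p * (if j = k then 1 else 0)
        + angMom i k q p * (if j = l then 1 else 0)) := by
  let δ : Fin N → Fin N → ℝ := fun a b => if a = b then 1 else 0
  have expand : ∀ s,
      α * (δ i s * q j + q i * δ j s) * (δ k s * p l + p k * δ l s)
        - α * (δ k s * q l + q k * δ l s) * (δ i s * p j + p i * δ j s)
      = δ i s * δ k s * (α * angMom j l q p) + δ i s * δ l s * (α * angMom j k q p)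
        + δ j s * δ k s * (α * angMom i l q p) + δ j s * δ l s * (α * angMom i k q p) := by
    intro s; simp only [angMom]; ring
  simp only [poissonBracket, deriv_demkovFradkin_update_q, deriv_demkovFradkin_update_p]
  rw [Finset.sum_congr rfl fun s _ => expand s]
  simp only [δ, Finset.sum_add_distrib, sum_ite_eq_mul_ite_eq_mul]
  ring
end
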